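/- Suppose the instance is WSPT-sorted, i.e. w j * E k ≥ w k * E j whenever j ≤ k in Fin n, and let κ ∈ ℝ with κ ≤ 1. If a randomized schedule μ satisfies P_μ(j→k) ≥ κ for every pair j < k with w j * E k > w k * E j, then cost μ - cost id ≤ (1 - κ) * (cost rev - cost id). (Theorem 4.3: pairwise correct-order probability at least κ implies relative optimality gap at most 1 - κ.) -/

import Mathlib

open Finset Nat

/-- Expected cost of schedule `σ` (σ j = position of job j):
`cost σ = ∑ j, w j * ∑_{k : σ k ≤ σ j} E k`. -/
noncomputable def cost {n : ℕ} (w E : Fin n → ℝ) (σ : Equiv.Perm (Fin n)) : ℝ :=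
  ∑ j, w j * ∑ k ∈ Finset.univ.filter (fun k => σ k ≤ σ j), E k

/-- Expected cost of a randomized schedule `μ`. -/
noncomputable def rcost {n : ℕ} (w E : Fin n → ℝ) (μ : Equiv.Perm (Fin n) → ℝ) : ℝ :=
  ∑ σ, μ σ * cost w E σ

/-- Probability that randomized schedule `μ` schedules job `j` before job `k`. -/
noncomputable def Pbefore {n : ℕ} (μ : Equiv.Perm (Fin n) → ℝ) (j k : Fin n) : ℝ :=
  ∑ σ ∈ Finset.univ.filter (fun σ : Equiv.Perm (Fin n) => σ j < σ k), μ σ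

/-!
Every pair of jobs `j < k` contributes to the cost of a schedule either `w k * E j` (when `j`
runs first) or `w j * E k` (when `k` runs first), on top of the schedule-independent
`∑ j, w j * E j`. So the identity (WSPT order) pays `w k * E j` and the reversed order pays
`w j * E k` on every pair, while a randomized schedule pays their combination with weights
`P_μ(j→k)` and `1 - P_μ(j→k)`. The gap to the identity is therefore `∑ (1 - P_μ(j→k)) (w j E k - w k E j)`, and
it is bounded termwise by `(1 - κ) (w j E k - w k E j)`: WSPT order makes every difference
nonnegative, and where it is positive, `P_μ(j→k) ≥ κ`.
-/

theorem Finset.sum_sum_eq_sum_diag_add_sum_Ioi {α M : Type*} [Fintype α] [LinearOrder α]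
    [LocallyFiniteOrderTop α] [AddCommMonoid M] (f : α → α → M) :
    ∑ j, ∑ k, f j k = ∑ j, f j j + ∑ j, ∑ k ∈ Ioi j, (f j k + f k j) := by
  have split : ∀ j k, f j k =
      (if j = k then f j k else 0) + (if j < k then f j k else 0) + (if k < j then f j k else 0) := by
    intro j k
    rcases lt_trichotomy j k with h | rfl | h
    · simp [h, h.ne, h.not_gt]
    · simp
    · simp [h, h.ne', h.not_gt]
  rw [sum_congr rfl fun j _ => sum_congr rfl fun k _ => split j k]
  simp only [sum_add_distrib, sum_ite_eq, mem_univ, if_true]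
  rw [sum_comm (f := fun j k => if k < j then f j k else 0), add_assoc]
  simp only [← sum_add_distrib, ← sum_filter, filter_lt_eq_Ioi]

section

variable {n : ℕ} (w E : Fin n → ℝ)

noncomputable def pairCost (σ : Equiv.Perm (Fin n)) (j k : Fin n) : ℝ :=
  if σ j < σ k then w k * E j else w j * E k

theorem cost_eq_sum_add_sum_pairCost (σ : Equiv.Perm (Fin n)) :
    cost w E σ = ∑ j, w j * E j + ∑ j, ∑ k ∈ Ioi j, pairCost w E σ j k := by
  rw [cost, sum_congr rfl fun j _ => by rw [mul_sum, sum_filter],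
    sum_sum_eq_sum_diag_add_sum_Ioi]
  simp only [le_refl, if_true]
  congr 1
  refine sum_congr rfl fun j _ => sum_congr rfl fun k hk => ?_
  have hσ : σ j ≠ σ k := σ.injective.ne (mem_Ioi.mp hk).ne
  rcases hσ.lt_or_gt with h | h
  · simp [pairCost, h, h.le, h.not_ge]
  · simp [pairCost, h.le, h.not_ge, h.not_gt]

theorem pairCost_refl {j k : Fin n} (h : j < k) : pairCost w E (Equiv.refl _) j k = w k * E j := by
  simp [pairCost, h]

theorem pairCost_revPerm {j k : Fin n} (h : j < k) :
    pairCost w E Fin.revPerm j k = w j * E k := by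
  simp [pairCost, h.not_gt]

theorem sum_mul_pairCost (μ : Equiv.Perm (Fin n) → ℝ) (j k : Fin n) :
    ∑ σ, μ σ * pairCost w E σ j k
      = Pbefore μ j k * (w k * E j) + (∑ σ, μ σ - Pbefore μ j k) * (w j * E k) := by
  simp only [pairCost, mul_ite, Pbefore, sum_ite, sum_mul, ← sum_filter_add_sum_filter_not univ
    (fun σ : Equiv.Perm (Fin n) => σ j < σ k) μ, add_sub_cancel_left]

theorem rcost_eq_sum_add_sum (μ : Equiv.Perm (Fin n) → ℝ) :
    rcost w E μ = (∑ σ, μ σ) * ∑ j, w j * E j + ∑ j, ∑ k ∈ Ioi j,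
      (Pbefore μ j k * (w k * E j) + (∑ σ, μ σ - Pbefore μ j k) * (w j * E k)) := by
  simp only [← sum_mul_pairCost, rcost, cost_eq_sum_add_sum_pairCost, mul_add, sum_add_distrib,
    sum_mul, mul_sum]
  congr 1
  · exact sum_comm
  · rw [sum_comm]
    exact sum_congr rfl fun j _ => sum_comm

theorem cost_sub_cost_refl (σ : Equiv.Perm (Fin n)) :
    cost w E σ - cost w E (Equiv.refl _) =
      ∑ j, ∑ k ∈ Ioi j, (pairCost w E σ j k - w k * E j) := by
  simp only [cost_eq_sum_add_sum_pairCost, add_sub_add_left_eq_sub, ← sum_sub_distrib]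
  exact sum_congr rfl fun j _ => sum_congr rfl fun k hk => by rw [pairCost_refl w E (mem_Ioi.mp hk)]

theorem rcost_sub_cost_refl {μ : Equiv.Perm (Fin n) → ℝ} (hμ : ∑ σ, μ σ = 1) :
    rcost w E μ - cost w E (Equiv.refl _) =
      ∑ j, ∑ k ∈ Ioi j, (1 - Pbefore μ j k) * (w j * E k - w k * E j) := by
  simp only [rcost_eq_sum_add_sum, hμ, one_mul, cost_eq_sum_add_sum_pairCost,
    add_sub_add_left_eq_sub, ← sum_sub_distrib]
  refine sum_congr rfl fun j _ => sum_congr rfl fun k hk => ?_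
  rw [pairCost_refl w E (mem_Ioi.mp hk)]
  ring

end

theorem stmt_5_general (n : ℕ) (w E : Fin n → ℝ)
    (hsorted : ∀ j k : Fin n, j ≤ k → w j * E k ≥ w k * E j)
    (κ : ℝ)
    (μ : Equiv.Perm (Fin n) → ℝ)
    (hμ1 : ∑ σ, μ σ = 1)
    (hP : ∀ j k : Fin n, j < k → w j * E k > w k * E j → Pbefore μ j k ≥ κ) :
    rcost w E μ - cost w E (Equiv.refl (Fin n))
      ≤ (1 - κ) * (cost w E (Fin.revPerm : Equiv.Perm (Fin n))
          - cost w E (Equiv.refl (Fin n))) := by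
  rw [rcost_sub_cost_refl w E hμ1, cost_sub_cost_refl]
  simp only [mul_sum]
  refine sum_le_sum fun j _ => sum_le_sum fun k hk => ?_
  have hjk : j < k := mem_Ioi.mp hk
  rw [pairCost_revPerm w E hjk]
  rcases (hsorted j k hjk.le).lt_or_eq with hlt | heq
  · exact mul_le_mul_of_nonneg_right (by linarith [hP j k hjk hlt]) (sub_nonneg.2 hlt.le)
  · simp [heq]

/-- Theorem 4.3: pairwise correct-order probability at least `κ` implies relative
optimality gap at most `1 - κ`. -/
theorem stmt_5 (n : ℕ) (hn : 1 ≤ n) (w E : Fin n → ℝ)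
    (hw : ∀ j, 0 < w j) (hE : ∀ j, 0 < E j)
    (hsorted : ∀ j k : Fin n, j ≤ k → w j * E k ≥ w k * E j)
    (κ : ℝ) (hκ : κ ≤ 1)
    (μ : Equiv.Perm (Fin n) → ℝ)
    (hμ0 : ∀ σ, 0 ≤ μ σ) (hμ1 : ∑ σ, μ σ = 1)
    (hP : ∀ j k : Fin n, j < k → w j * E k > w k * E j → Pbefore μ j k ≥ κ) :
    rcost w E μ - cost w E (Equiv.refl (Fin n))
      ≤ (1 - κ) * (cost w E (Fin.revPerm : Equiv.Perm (Fin n))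
          - cost w E (Equiv.refl (Fin n))) :=
  stmt_5_general n w E hsorted κ μ hμ1 hP
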